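/- arXiv:1608.02332 — 2 statements merged into one kernel-verified Lean document; each statement's English description precedes it below -/
import Mathlib

section
/- For every integer n ≥ 1, the fan F_n is (5,1)-total-threshold-colorable: for every subset N of its edge set there exists a (5,1)-threshold-coloring of F_n with respect to (N, E \ N). -/
/-- An `(r,t)`-threshold-coloring of the graph `G` with respect to the near-far-labeling
`(N, G.edgeSet \ N)`: a coloring with colors `{0, …, r-1}` such that the colors of the
endvertices of each near edge differ by at most `t`, and the colors of the endvertices of
each far edge differ by more than `t`. -/
def IsThresholdColoring {V : Type*} (G : SimpleGraph V) (N : Set (Sym2 V))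
    (r t : ℕ) (c : V → ℕ) : Prop :=
  (∀ v, c v < r) ∧
  (∀ ⦃u v⦄, G.Adj u v → s(u, v) ∈ N → |(c u : ℤ) - (c v : ℤ)| ≤ (t : ℤ)) ∧
  (∀ ⦃u v⦄, G.Adj u v → s(u, v) ∉ N → (t : ℤ) < |(c u : ℤ) - (c v : ℤ)|)

/-- The fan `F_n`: the path `v_1 v_2 … v_n` (the spine) together with a universal
vertex `v_0` adjacent to every spine vertex. Vertex `0` of `Fin (n+1)` is the apex. -/
def fanGraph (n : ℕ) : SimpleGraph (Fin (n + 1)) :=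
  SimpleGraph.fromRel fun i j => i = 0 ∨ (j : ℕ) = (i : ℕ) + 1

/-! The apex gets color `2`. A spine vertex gets a low color (`0` or `1`) or a high one
(`3` or `4`); within its side, `1` and `3` are near the apex and `0` and `4` are far from it.
Two spine colors are near exactly when they lie on the same side, so walking along the
spine it suffices to switch sides at every far spine edge and stay at every near one. -/

theorem isThresholdColoring_fromRel {V : Type*} {rel : V → V → Prop} {N : Set (Sym2 V)}
    {r t : ℕ} {c : V → ℕ} (hc : ∀ v, c v < r)
    (hrel : ∀ u v, u ≠ v → rel u v → (s(u, v) ∈ N ↔ |(c u : ℤ) - c v| ≤ t)) :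
    IsThresholdColoring (SimpleGraph.fromRel rel) N r t c := by
  have hadj : ∀ ⦃u v⦄, (SimpleGraph.fromRel rel).Adj u v →
      (s(u, v) ∈ N ↔ |(c u : ℤ) - c v| ≤ t) := by
    rintro u v ⟨huv, hr | hr⟩
    · exact hrel u v huv hr
    · rw [Sym2.eq_swap, abs_sub_comm]
      exact hrel v u huv.symm hr
  exact ⟨hc, fun u v h hN => (hadj h).1 hN, fun u v h hN => not_le.1 (mt (hadj h).2 hN)⟩

def spineColor (high nearApex : Bool) : ℕ :=
  match high, nearApex with
  | false, false => 0
  | false, true => 1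
  | true, true => 3
  | true, false => 4

theorem spineColor_lt_five (high nearApex : Bool) : spineColor high nearApex < 5 := by
  cases high <;> cases nearApex <;> decide

theorem abs_two_sub_spineColor_le_one_iff (high nearApex : Bool) :
    |(2 : ℤ) - spineColor high nearApex| ≤ 1 ↔ nearApex = true := by
  cases high <;> cases nearApex <;> decide

theorem abs_spineColor_sub_spineColor_le_one_iff (high high' nearApex nearApex' : Bool) :
    |(spineColor high nearApex : ℤ) - spineColor high' nearApex'| ≤ 1 ↔ high = high' := by
  cases high <;> cases high' <;> cases nearApex <;> cases nearApex' <;> decide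

def pathSide (near : ℕ → Bool) : ℕ → Bool
  | 0 => false
  | k + 1 => if near k then pathSide near k else !pathSide near k

theorem pathSide_eq_pathSide_succ_iff (near : ℕ → Bool) (k : ℕ) :
    pathSide near k = pathSide near (k + 1) ↔ near k = true := by
  cases h : near k <;> simp [pathSide, h]

open Classical Fin.NatCast in
noncomputable def fanColoring {n : ℕ} (N : Set (Sym2 (Fin (n + 1)))) (v : Fin (n + 1)) : ℕ :=
  if v = 0 then 2 else
    spineColor (pathSide (fun k => decide (s((k : Fin (n + 1)), ((k + 1 : ℕ) : Fin (n + 1))) ∈ N)) v)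
      (decide (s(0, v) ∈ N))

theorem fanColoring_lt_five {n : ℕ} (N : Set (Sym2 (Fin (n + 1)))) (v : Fin (n + 1)) :
    fanColoring N v < 5 := by
  unfold fanColoring
  split_ifs
  exacts [by norm_num, spineColor_lt_five _ _]

theorem fan_total_threshold_colorable_general (n : ℕ)
    (N : Set (Sym2 (Fin (n + 1)))) :
    ∃ c : Fin (n + 1) → ℕ, IsThresholdColoring (fanGraph n) N 5 1 c := by
  classical
  refine ⟨fanColoring N, isThresholdColoring_fromRel (fanColoring_lt_five N) ?_⟩
  intro u v huv hrel
  by_cases hu : u = 0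
  · subst hu
    rw [fanColoring, fanColoring, if_pos rfl, if_neg huv.symm, Nat.cast_ofNat, Nat.cast_one,
      abs_two_sub_spineColor_le_one_iff, decide_eq_true_iff]
  have hsucc : (v : ℕ) = u + 1 := hrel.resolve_left hu
  have hv : v ≠ 0 := by rintro rfl; simp at hsucc
  rw [fanColoring, fanColoring, if_neg hu, if_neg hv, Nat.cast_one,
    abs_spineColor_sub_spineColor_le_one_iff, hsucc, pathSide_eq_pathSide_succ_iff,
    decide_eq_true_iff, ← hsucc, Fin.cast_val_eq_self, Fin.cast_val_eq_self]

/-- For every `n ≥ 1`, the fan `F_n` is `(5,1)`-total-threshold-colorable. -/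
theorem fan_total_threshold_colorable (n : ℕ) (hn : 1 ≤ n)
    (N : Set (Sym2 (Fin (n + 1)))) (hN : N ⊆ (fanGraph n).edgeSet) :
    ∃ c : Fin (n + 1) → ℕ, IsThresholdColoring (fanGraph n) N 5 1 c :=
  fan_total_threshold_colorable_general n N
end

section
/- For every integer n ≥ 0, the ladder L_n = P_n □ K_2 is (5,1)-total-threshold-colorable: for every subset N of its edge set there exists a (5,1)-threshold-coloring of L_n with respect to (N, E \ N). -/
/-- The ladder `L_n = P_n □ K_2`: the Cartesian (box) product of the path with `n` edges
(on `n+1` vertices) with the complete graph `K_2`. -/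
def ladderGraph (n : ℕ) : SimpleGraph (Fin (n + 1) × Fin 2) :=
  (SimpleGraph.pathGraph (n + 1)).boxProd (⊤ : SimpleGraph (Fin 2))

/-!
Color the ladder column by column, a column being the pair of colors on one rung. A single
column cannot be tracked: no nonempty set of columns lets each member be extended within the
set for every labelling of the next rung and rails. Instead we keep a list of columns, each the
last column of some valid coloring of the ladder so far, taken from a fixed finite family
`winningColumns`: for every labelling of the next rung and rails, some list of the family
consists of columns each extending one of the current ones.
-/

def Respects (near : Bool) (a b : ℕ) : Prop :=
  (a ≤ b + 1 ∧ b ≤ a + 1) ↔ near = true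

instance (near : Bool) (a b : ℕ) : Decidable (Respects near a b) := by
  unfold Respects; infer_instance

theorem respects_decide_iff {P : Prop} [Decidable P] {a b : ℕ} :
    Respects (decide P) a b ↔ (|(a : ℤ) - b| ≤ 1 ↔ P) := by
  have hnear : (a ≤ b + 1 ∧ b ≤ a + 1) ↔ |(a : ℤ) - b| ≤ 1 := by rw [abs_le]; omega
  rw [Respects, hnear, decide_eq_true_iff]

theorem isThresholdColoring_of_forall_adj {V : Type*} {G : SimpleGraph V} {N : Set (Sym2 V)}
    {r t : ℕ} {c : V → ℕ} (hr : ∀ v, c v < r)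
    (hadj : ∀ ⦃u v⦄, G.Adj u v → (|(c u : ℤ) - c v| ≤ t ↔ s(u, v) ∈ N)) :
    IsThresholdColoring G N r t c :=
  ⟨hr, fun _ _ huv hN => (hadj huv).2 hN, fun _ _ huv hN => not_le.1 (mt (hadj huv).1 hN)⟩

theorem ladderGraph.forall_adj {n : ℕ} {P : Fin (n + 1) × Fin 2 → Fin (n + 1) × Fin 2 → Prop}
    (hsymm : ∀ u v, P u v → P v u) (hrung : ∀ x, P (x, 0) (x, 1))
    (hrail : ∀ (x y : Fin (n + 1)) j, x.val + 1 = y.val → P (x, j) (y, j)) :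
    ∀ ⦃u v⦄, (ladderGraph n).Adj u v → P u v := by
  rintro ⟨x, j⟩ ⟨y, k⟩ (⟨hxy, rfl : j = k⟩ | ⟨hjk, rfl : x = y⟩)
  · rcases SimpleGraph.pathGraph_adj.1 hxy with h | h
    exacts [hrail x y j h, hsymm _ _ (hrail y x j h)]
  · fin_cases j <;> fin_cases k
    exacts [absurd rfl hjk, hrung x, hsymm _ _ (hrung x), absurd rfl hjk]

section Paths

variable {σ : Type*} (ok : ℕ → σ → Prop) (step : ℕ → σ → σ → Prop)

def IsPathEnd (m : ℕ) (p : σ) : Prop :=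
  ∃ g : ℕ → σ, g m = p ∧ (∀ i ≤ m, ok i (g i)) ∧ ∀ i < m, step i (g i) (g (i + 1))

variable {ok step}

theorem isPathEnd_zero {p : σ} (hp : ok 0 p) : IsPathEnd ok step 0 p :=
  ⟨fun _ => p, rfl, fun _ hi => Nat.le_zero.1 hi ▸ hp, fun _ hi => absurd hi (Nat.not_lt_zero _)⟩

theorem IsPathEnd.snoc {m : ℕ} {p q : σ} (hp : IsPathEnd ok step m p) (hpq : step m p q)
    (hq : ok (m + 1) q) : IsPathEnd ok step (m + 1) q := by
  obtain ⟨g, rfl, hok, hstep⟩ := hp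
  refine ⟨Function.update g (m + 1) q, by simp, fun i hi => ?_, fun i hi => ?_⟩
  · rcases Nat.le_succ_iff.1 hi with hi | rfl
    · simpa [Function.update_of_ne (by omega : i ≠ m + 1)] using hok i hi
    · simpa using hq
  · rcases Nat.lt_succ_iff_lt_or_eq.1 hi with hi | rfl
    · simpa [Function.update_of_ne (by omega : i ≠ m + 1),
        Function.update_of_ne (by omega : i + 1 ≠ m + 1)] using hstep i hi
    · simpa [Function.update_of_ne (by omega : i ≠ i + 1)] using hpq

theorem exists_mem_forall_isPathEnd (W : ℕ → Set (List σ))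
    (hok : ∀ m, ∀ l ∈ W m, ∀ p ∈ l, ok m p) (h0 : (W 0).Nonempty)
    (hW : ∀ m, ∀ l ∈ W m, ∃ l' ∈ W (m + 1), ∀ q ∈ l', ∃ p ∈ l, step m p q) :
    ∀ m, ∃ l ∈ W m, ∀ p ∈ l, IsPathEnd ok step m p
  | 0 => h0.imp fun l hl => ⟨hl, fun p hp => isPathEnd_zero (hok 0 l hl p hp)⟩
  | m + 1 => by
    obtain ⟨l, hl, hends⟩ := exists_mem_forall_isPathEnd W hok h0 hW m
    obtain ⟨l', hl', hreach⟩ := hW m l hl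
    refine ⟨l', hl', fun q hq => ?_⟩
    obtain ⟨p, hp, hpq⟩ := hreach q hq
    exact (hends p hp).snoc hpq (hok (m + 1) l' hl' q hq)

end Paths

-- Found by computer search; invariant under swapping the rails and under `a ↦ 4 - a`.
def winningColumns : Bool → List (List (Fin 2 → ℕ))
  | false => [[![0, 2]], [![0, 3], ![0, 4]], [![0, 4], ![1, 4]], [![2, 0]],
      [![2, 4]], [![3, 0], ![4, 0]], [![4, 0], ![4, 1]], [![4, 2]]]
  | true => [[![0, 0], ![0, 1]], [![0, 0], ![1, 0]], [![1, 2]], [![2, 1]],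
      [![2, 3]], [![3, 2]], [![3, 4], ![4, 4]], [![4, 3], ![4, 4]]]

theorem winningColumns_ne_nil : ∀ r, winningColumns r ≠ [] := by
  decide

theorem winningColumns_valid : ∀ r, ∀ l ∈ winningColumns r, l ≠ [] ∧
    ∀ q ∈ l, (∀ j, q j < 5) ∧ Respects r (q 0) (q 1) := by
  decide

theorem winningColumns_step : ∀ r r' e₀ e₁ : Bool, ∀ l ∈ winningColumns r,
    ∃ l' ∈ winningColumns r', ∀ q ∈ l', ∃ p ∈ l,
      Respects e₀ (p 0) (q 0) ∧ Respects e₁ (p 1) (q 1) := by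
  decide

theorem exists_ladder_columns (rung : ℕ → Bool) (rail : Fin 2 → ℕ → Bool) (n : ℕ) :
    ∃ g : ℕ → Fin 2 → ℕ,
      (∀ i ≤ n, (∀ j, g i j < 5) ∧ Respects (rung i) (g i 0) (g i 1)) ∧
      ∀ i < n, ∀ j, Respects (rail j i) (g i j) (g (i + 1) j) := by
  have hok : ∀ m, ∀ l ∈ winningColumns (rung m), ∀ q ∈ l,
      (∀ j, q j < 5) ∧ Respects (rung m) (q 0) (q 1) :=
    fun m l hl => (winningColumns_valid _ l hl).2
  have hstep : ∀ m, ∀ l ∈ winningColumns (rung m), ∃ l' ∈ winningColumns (rung (m + 1)),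
      ∀ q ∈ l', ∃ p ∈ l, ∀ j, Respects (rail j m) (p j) (q j) := fun m l hl => by
    simpa [Fin.forall_fin_two] using
      winningColumns_step _ (rung (m + 1)) (rail 0 m) (rail 1 m) l hl
  obtain ⟨l, hl, hends⟩ := exists_mem_forall_isPathEnd
    (fun m => {l | l ∈ winningColumns (rung m)}) hok
    (List.exists_mem_of_ne_nil _ (winningColumns_ne_nil _)) hstep n
  obtain ⟨p, hp⟩ := List.exists_mem_of_ne_nil l (winningColumns_valid _ l hl).1
  obtain ⟨g, -, hg⟩ := hends p hp
  exact ⟨g, hg⟩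

theorem ladder_total_threshold_colorable_general (n : ℕ)
    (N : Set (Sym2 (Fin (n + 1) × Fin 2))) :
    ∃ c : Fin (n + 1) × Fin 2 → ℕ, IsThresholdColoring (ladderGraph n) N 5 1 c := by
  classical
  let x (i : ℕ) : Fin (n + 1) := Fin.ofNat (n + 1) i
  obtain ⟨g, hcol, hrail⟩ := exists_ladder_columns
    (fun i => decide (s((x i, 0), (x i, 1)) ∈ N))
    (fun j i => decide (s((x i, j), (x (i + 1), j)) ∈ N)) n
  refine ⟨fun v => g v.1 v.2, isThresholdColoring_of_forall_adj
    (fun v => (hcol v.1 (Nat.lt_succ_iff.1 v.1.2)).1 v.2) ?_⟩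
  refine ladderGraph.forall_adj (fun u v h => ?_) (fun i => ?_) (fun i k j hik => ?_)
  · rwa [abs_sub_comm, Sym2.eq_swap]
  · simpa [x, respects_decide_iff] using (hcol i (Nat.lt_succ_iff.1 i.2)).2
  · simpa [x, respects_decide_iff, hik] using hrail i (by omega) j

/-- For every `n ≥ 0`, the ladder `L_n` is `(5,1)`-total-threshold-colorable. -/
theorem ladder_total_threshold_colorable (n : ℕ)
    (N : Set (Sym2 (Fin (n + 1) × Fin 2))) (hN : N ⊆ (ladderGraph n).edgeSet) :
    ∃ c : Fin (n + 1) × Fin 2 → ℕ, IsThresholdColoring (ladderGraph n) N 5 1 c :=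
  ladder_total_threshold_colorable_general n N
end
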